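/- arXiv:2410.16401 — 3 statements merged into one kernel-verified Lean document; each statement's English description precedes it below -/
import Mathlib

section
/- Let φ be infinitely differentiable with φ'(z) ≥ ρ1 and φ'''(z) ≥ ρ2 for all z ∈ ℝ, where ρ1, ρ2 > 0, and suppose x_1, …, x_n are linearly independent. Let θ* satisfy f_i(θ*) = y_i for all i ∈ {1,…,n}, and suppose the Euclidean gradient DG(θ*) lies in the linear span of {Df_1(θ*), …, Df_n(θ*)} (i.e., θ* is a first-order stationary point of the trace of the Hessian of L on the zero-loss set). Then for every i ∈ {1,…,n} and every j ∈ {1,…,m}, φ(θ*_j · x_i) = y_i / m; in particular all the inner products θ*_j · x_i, j = 1,…,m, are equal to the common value φ^{-1}(y_i/m). -/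
/-!
Stationarity says DG(θ*) = Σᵢ cᵢ Dfᵢ(θ*). Reading off the j-th block and using the linear
independence of the xᵢ gives 2 φ'(θ*_j·xᵢ) φ''(θ*_j·xᵢ) = cᵢ φ'(θ*_j·xᵢ), hence
φ''(θ*_j·xᵢ) = cᵢ / 2 because φ' > 0. Since φ''' > 0, φ'' is injective, so θ*_j·xᵢ does not
depend on j, and the interpolation condition fᵢ(θ*) = yᵢ becomes m φ(θ*_j·xᵢ) = yᵢ.
-/

open scoped RealInnerProductSpace
open Real Filter

noncomputable section

/-- The parameter space ℝ^{md}: m blocks θ_j ∈ ℝ^d, with the Euclidean norm. -/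
abbrev Param (m d : ℕ) : Type := PiLp 2 (fun _ : Fin m => EuclideanSpace ℝ (Fin d))

/-- Network output f_i(θ) = Σ_j φ(θ_j · x_i). -/
def netF {n m d : ℕ} (φ : ℝ → ℝ) (x : Fin n → EuclideanSpace ℝ (Fin d)) (i : Fin n)
    (θ : Param m d) : ℝ := ∑ j, φ ⟪θ j, x i⟫

/-- Euclidean gradient Df_i(θ), with j-th block φ'(θ_j · x_i) x_i. -/
def gradF {n m d : ℕ} (φ : ℝ → ℝ) (x : Fin n → EuclideanSpace ℝ (Fin d)) (i : Fin n)
    (θ : Param m d) : Param m d := WithLp.toLp 2 (fun j => (deriv φ ⟪θ j, x i⟫) • x i)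

/-- Implicit regularizer G(θ) = Σ_i Σ_j φ'(θ_j · x_i)². -/
def regG {n m d : ℕ} (φ : ℝ → ℝ) (x : Fin n → EuclideanSpace ℝ (Fin d))
    (θ : Param m d) : ℝ := ∑ i, ∑ j, (deriv φ ⟪θ j, x i⟫) ^ 2

/-- Euclidean gradient DG(θ), with j-th block Σ_i 2 φ'(θ_j·x_i) φ''(θ_j·x_i) x_i. -/
def gradRegG {n m d : ℕ} (φ : ℝ → ℝ) (x : Fin n → EuclideanSpace ℝ (Fin d))
    (θ : Param m d) : Param m d :=
  WithLp.toLp 2 (fun j => ∑ i, (2 * deriv φ ⟪θ j, x i⟫ * deriv (deriv φ) ⟪θ j, x i⟫) • x i)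

/-- Squared loss L(θ) = Σ_i (f_i(θ) − y_i)². -/
def lossL {n m d : ℕ} (φ : ℝ → ℝ) (x : Fin n → EuclideanSpace ℝ (Fin d)) (y : Fin n → ℝ)
    (θ : Param m d) : ℝ := ∑ i, (netF φ x i θ - y i) ^ 2

/-- Jacobian Df(θ) : ℝ^{md} → ℝ^n, whose i-th row is Df_i(θ). -/
def jacobian {n m d : ℕ} (φ : ℝ → ℝ) (x : Fin n → EuclideanSpace ℝ (Fin d))
    (θ : Param m d) : Param m d →ₗ[ℝ] (Fin n → ℝ) :=
  LinearMap.pi fun i => (innerSL ℝ (gradF φ x i θ)).toLinearMap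

/-- Riemannian gradient ∇G(θ): orthogonal projection of DG(θ) onto ker Df(θ). -/
def rgradG {n m d : ℕ} (φ : ℝ → ℝ) (x : Fin n → EuclideanSpace ℝ (Fin d))
    (θ : Param m d) : Param m d :=
  (Submodule.orthogonalProjection (LinearMap.ker (jacobian φ x θ)) (gradRegG φ x θ) : Param m d)

section Stationarity

variable {n m d : ℕ} {φ : ℝ → ℝ} {x : Fin n → EuclideanSpace ℝ (Fin d)} {θ : Param m d}

lemma sum_smul_gradF_apply (c : Fin n → ℝ) (j : Fin m) :
    (∑ i, c i • gradF φ x i θ) j = ∑ i, (c i * deriv φ ⟪θ j, x i⟫) • x i := by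
  simp [gradF, WithLp.ofLp_sum, smul_smul]

lemma gradRegG_apply (j : Fin m) :
    gradRegG φ x θ j =
      ∑ i, (2 * deriv φ ⟪θ j, x i⟫ * deriv (deriv φ) ⟪θ j, x i⟫) • x i := rfl

lemma deriv_deriv_eq_of_sum_smul_gradF_eq_gradRegG (hlin : LinearIndependent ℝ x)
    (hφ' : ∀ z, deriv φ z ≠ 0) {c : Fin n → ℝ}
    (hc : ∑ i, c i • gradF φ x i θ = gradRegG φ x θ) (i : Fin n) (j : Fin m) :
    deriv (deriv φ) ⟪θ j, x i⟫ = c i / 2 := by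
  have hblock := congrArg (· j) hc
  simp only [sum_smul_gradF_apply, gradRegG_apply] at hblock
  have hcoeff := Fintype.linearIndependent_iffₛ.mp hlin _ _ hblock i
  apply mul_left_cancel₀ (hφ' ⟪θ j, x i⟫)
  linear_combination -hcoeff / 2

lemma inner_eq_of_gradRegG_mem_span (hlin : LinearIndependent ℝ x)
    (hφ' : ∀ z, deriv φ z ≠ 0) (hφ'' : Function.Injective (deriv (deriv φ)))
    (hstat : gradRegG φ x θ ∈ Submodule.span ℝ (Set.range fun i => gradF φ x i θ))
    (i : Fin n) (j j' : Fin m) :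
    ⟪θ j, x i⟫ = ⟪θ j', x i⟫ := by
  obtain ⟨c, hc⟩ := (Submodule.mem_span_range_iff_exists_fun ℝ).mp hstat
  apply hφ''
  rw [deriv_deriv_eq_of_sum_smul_gradF_eq_gradRegG hlin hφ' hc,
    deriv_deriv_eq_of_sum_smul_gradF_eq_gradRegG hlin hφ' hc]

lemma netF_eq_mul_of_inner_eq {i : Fin n} {j : Fin m}
    (h : ∀ j', ⟪θ j, x i⟫ = ⟪θ j', x i⟫) :
    netF φ x i θ = m * φ ⟪θ j, x i⟫ := by
  simp [netF, ← h]

end Stationarity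

theorem stmt_0_general
    (n m d : ℕ)
    (x : Fin n → EuclideanSpace ℝ (Fin d))
    (hlin : LinearIndependent ℝ x)
    (y : Fin n → ℝ)
    (φ : ℝ → ℝ)
    (ρ1 ρ2 : ℝ) (hρ1 : 0 < ρ1) (hρ2 : 0 < ρ2)
    (hφ' : ∀ z, ρ1 ≤ deriv φ z)
    (hφ''' : ∀ z, ρ2 ≤ deriv (deriv (deriv φ)) z)
    (θs : Param m d)
    (hfit : ∀ i, netF φ x i θs = y i)
    (hstat : gradRegG φ x θs ∈ Submodule.span ℝ (Set.range fun i => gradF φ x i θs)) :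
    ∀ i j, φ ⟪θs j, x i⟫ = y i / (m : ℝ) ∧ ∀ j', ⟪θs j, x i⟫ = ⟪θs j', x i⟫ := by
  have hφ'_ne : ∀ z, deriv φ z ≠ 0 := fun z => (hρ1.trans_le (hφ' z)).ne'
  have hφ''_inj : Function.Injective (deriv (deriv φ)) :=
    (strictMono_of_deriv_pos fun z => hρ2.trans_le (hφ''' z)).injective
  intro i j
  have heq : ∀ j', ⟪θs j, x i⟫ = ⟪θs j', x i⟫ :=
    inner_eq_of_gradRegG_mem_span hlin hφ'_ne hφ''_inj hstat i j
  refine ⟨?_, heq⟩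
  rw [eq_div_iff (Nat.cast_ne_zero.mpr j.pos.ne'), ← hfit i, netF_eq_mul_of_inner_eq heq,
    mul_comm]

/-- at a first-order stationary point of Tr D²L on the zero-loss set,
all pre-activations equal φ⁻¹(y_i/m). -/
theorem stmt_0
    (n m d : ℕ) (hn : 1 ≤ n) (hm : 1 ≤ m) (hd : 1 ≤ d)
    (x : Fin n → EuclideanSpace ℝ (Fin d)) (hx : ∀ i, ‖x i‖ = 1)
    (hlin : LinearIndependent ℝ x)
    (y : Fin n → ℝ)
    (φ : ℝ → ℝ) (hφ : ContDiff ℝ (⊤ : ℕ∞) φ)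
    (ρ1 ρ2 : ℝ) (hρ1 : 0 < ρ1) (hρ2 : 0 < ρ2)
    (hφ' : ∀ z, ρ1 ≤ deriv φ z)
    (hφ''' : ∀ z, ρ2 ≤ deriv (deriv (deriv φ)) z)
    (θs : Param m d)
    (hfit : ∀ i, netF φ x i θs = y i)
    (hstat : gradRegG φ x θs ∈ Submodule.span ℝ (Set.range fun i => gradF φ x i θs)) :
    ∀ i j, φ ⟪θs j, x i⟫ = y i / (m : ℝ) ∧ ∀ j', ⟪θs j, x i⟫ = ⟪θs j', x i⟫ :=
  stmt_0_general n m d x hlin y φ ρ1 ρ2 hρ1 hρ2 hφ' hφ''' θs hfit hstat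
end
end

section
/- Let φ be infinitely differentiable with φ'(z) ≥ ρ1 and φ'''(z) ≥ ρ2 for all z ∈ ℝ, where ρ1, ρ2 > 0, satisfying β-normality with constant β > 0, and assume the coherence assumption with constant μ > 0. Let θ ∈ ℝ^{md} and α' ∈ ℝ^n satisfy ‖DG(θ) − 2 Σ_{i=1}^n α'_i Df_i(θ)‖ ≤ √μ · β. Then for every u = (u_1, …, u_m) ∈ ℝ^{md}: Σ_{j=1}^m Σ_{i=1}^n (2 φ'(θ_j · x_i) φ'''(θ_j · x_i) + 2 φ''(θ_j · x_i)(φ''(θ_j · x_i) − α'_i)) (x_i · u_j)² ≥ Σ_{j=1}^m Σ_{i=1}^n φ'(θ_j · x_i) φ'''(θ_j · x_i) (x_i · u_j)² ≥ 0. (The left-hand quadratic form is the Riemannian Hessian of the trace of the Hessian of L on the zero-loss manifold, evaluated at the tangent vector u; hence this Hessian is positive semidefinite at approximate stationary points.) -/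
open scoped RealInnerProductSpace
open Real Filter

noncomputable section

/-! Write the residual `DG(θ) - 2 Σ α'_i Df_i(θ)` blockwise: its `j`-th block is
`Σ_i c_ij x_i` with `c_ij = 2 φ'(θ_j·x_i)(φ''(θ_j·x_i) - α'_i)`. Coherence turns the bound
`√μ β` on the residual into `|c_ij| ≤ β`, and β-normality then makes every coefficient
`φ'φ''' + 2φ''(φ'' - α'_i)` of the difference of the two quadratic forms nonnegative. -/

section Coherence

variable {ι E : Type*} [Fintype ι] [SeminormedAddCommGroup E] [Module ℝ E]

theorem abs_le_of_coherent {x : ι → E} {c : ι → ℝ} {μ β : ℝ} (hμ : 0 < μ) (hβ : 0 ≤ β)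
    (hcoh : μ * ∑ i, c i ^ 2 ≤ ‖∑ i, c i • x i‖ ^ 2) (hsmall : ‖∑ i, c i • x i‖ ≤ √μ * β)
    (i : ι) : |c i| ≤ β := by
  have hsum : μ * ∑ k, c k ^ 2 ≤ μ * β ^ 2 :=
    calc μ * ∑ k, c k ^ 2 ≤ ‖∑ k, c k • x k‖ ^ 2 := hcoh
      _ ≤ (√μ * β) ^ 2 := pow_le_pow_left₀ (norm_nonneg _) hsmall 2
      _ = μ * β ^ 2 := by rw [mul_pow, Real.sq_sqrt hμ.le]
  have hci : c i ^ 2 ≤ β ^ 2 :=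
    (Finset.single_le_sum (fun k _ => sq_nonneg (c k)) (Finset.mem_univ i)).trans
      (le_of_mul_le_mul_left hsum hμ)
  exact abs_le_of_sq_le_sq hci hβ

end Coherence

section Normality

variable {A B C a β : ℝ}

theorem mul_nonneg_of_normal (hA : 0 < A) (hβ : 0 ≤ β) (hnormal : β * |B| ≤ A ^ 2 * C) :
    0 ≤ A * C :=
  mul_nonneg hA.le <| nonneg_of_mul_nonneg_right
    ((mul_nonneg hβ (abs_nonneg B)).trans hnormal) (pow_pos hA 2)

/-- Multiplied by `A > 0`, the claim reads `A²C + B · 2A(B - a) ≥ 0`, and normality bounds the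
second term by `β|B| ≤ A²C`. -/
theorem mul_add_two_mul_mul_sub_nonneg (hA : 0 < A) (hnormal : β * |B| ≤ A ^ 2 * C)
    (hc : |2 * A * (B - a)| ≤ β) : 0 ≤ A * C + 2 * B * (B - a) := by
  have hBc : -(A ^ 2 * C) ≤ B * (2 * A * (B - a)) :=
    calc -(A ^ 2 * C) ≤ -(|B| * β) := by linarith
      _ ≤ -(|B| * |2 * A * (B - a)|) := neg_le_neg (mul_le_mul_of_nonneg_left hc (abs_nonneg B))
      _ ≤ B * (2 * A * (B - a)) := by rw [← abs_mul]; exact neg_abs_le _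
  refine nonneg_of_mul_nonneg_right ?_ hA
  linarith

end Normality

theorem gradRegG_sub_smul_sum_gradF_apply {n m d : ℕ} (φ : ℝ → ℝ)
    (x : Fin n → EuclideanSpace ℝ (Fin d)) (θ : Param m d) (α : Fin n → ℝ) (j : Fin m) :
    (gradRegG φ x θ - (2 : ℝ) • ∑ i, α i • gradF φ x i θ) j =
      ∑ i, (2 * deriv φ ⟪θ j, x i⟫ * (deriv (deriv φ) ⟪θ j, x i⟫ - α i)) • x i := by
  simp only [PiLp.sub_apply, PiLp.smul_apply, WithLp.ofLp_sum, Finset.sum_apply, gradRegG,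
    gradF, Finset.smul_sum, smul_smul, ← Finset.sum_sub_distrib, ← sub_smul]
  refine Finset.sum_congr rfl fun i _ => ?_
  ring_nf

theorem stmt_6_general
    (n m d : ℕ)
    (x : Fin n → EuclideanSpace ℝ (Fin d))
    (μ : ℝ) (hμ : 0 < μ)
    (hcoh : ∀ c : Fin n → ℝ, μ * ∑ i, (c i) ^ 2 ≤ ‖∑ i, c i • x i‖ ^ 2)
    (φ : ℝ → ℝ)
    (ρ1 : ℝ) (hρ1 : 0 < ρ1)
    (hφ' : ∀ z, ρ1 ≤ deriv φ z)
    (β : ℝ) (hβ : 0 < β)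
    (hnormal : ∀ z, β * |deriv (deriv φ) z| ≤ (deriv φ z) ^ 2 * deriv (deriv (deriv φ)) z)
    (θ : Param m d) (α : Fin n → ℝ)
    (happrox : ‖gradRegG φ x θ - (2 : ℝ) • ∑ i, α i • gradF φ x i θ‖ ≤ Real.sqrt μ * β) :
    ∀ u : Param m d,
      (∑ j, ∑ i, (deriv φ ⟪θ j, x i⟫ * deriv (deriv (deriv φ)) ⟪θ j, x i⟫)
          * ⟪x i, u j⟫ ^ 2
        ≤ ∑ j, ∑ i,
            (2 * deriv φ ⟪θ j, x i⟫ * deriv (deriv (deriv φ)) ⟪θ j, x i⟫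
              + 2 * deriv (deriv φ) ⟪θ j, x i⟫ * (deriv (deriv φ) ⟪θ j, x i⟫ - α i))
            * ⟪x i, u j⟫ ^ 2) ∧
      (0 ≤ ∑ j, ∑ i, (deriv φ ⟪θ j, x i⟫ * deriv (deriv (deriv φ)) ⟪θ j, x i⟫)
          * ⟪x i, u j⟫ ^ 2) := by
  intro u
  have hpos : ∀ z, 0 < deriv φ z := fun z => hρ1.trans_le (hφ' z)
  have hcoef : ∀ j i, |2 * deriv φ ⟪θ j, x i⟫ * (deriv (deriv φ) ⟪θ j, x i⟫ - α i)| ≤ β :=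
    fun j => abs_le_of_coherent hμ hβ.le (hcoh _) <| by
      rw [← gradRegG_sub_smul_sum_gradF_apply]
      exact (PiLp.norm_apply_le _ j).trans happrox
  refine ⟨Finset.sum_le_sum fun j _ => Finset.sum_le_sum fun i _ => ?_,
    Finset.sum_nonneg fun j _ => Finset.sum_nonneg fun i _ => ?_⟩
  · have := mul_nonneg (mul_add_two_mul_mul_sub_nonneg (hpos _) (hnormal _) (hcoef j i))
      (sq_nonneg ⟪x i, u j⟫)
    linarith
  · exact mul_nonneg (mul_nonneg_of_normal (hpos _) hβ.le (hnormal _)) (sq_nonneg _)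

/-- at √μ·β-approximate stationary points the quadratic form of the
Riemannian Hessian of Tr D²L dominates Σ φ'φ'''(x_i·u_j)² ≥ 0, hence is PSD. -/
theorem stmt_6
    (n m d : ℕ) (hn : 1 ≤ n) (hm : 1 ≤ m) (hd : 1 ≤ d)
    (x : Fin n → EuclideanSpace ℝ (Fin d)) (hx : ∀ i, ‖x i‖ = 1)
    (μ : ℝ) (hμ : 0 < μ)
    (hcoh : ∀ c : Fin n → ℝ, μ * ∑ i, (c i) ^ 2 ≤ ‖∑ i, c i • x i‖ ^ 2)
    (φ : ℝ → ℝ) (hφ : ContDiff ℝ (⊤ : ℕ∞) φ)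
    (ρ1 ρ2 : ℝ) (hρ1 : 0 < ρ1) (hρ2 : 0 < ρ2)
    (hφ' : ∀ z, ρ1 ≤ deriv φ z)
    (hφ''' : ∀ z, ρ2 ≤ deriv (deriv (deriv φ)) z)
    (β : ℝ) (hβ : 0 < β)
    (hnormal : ∀ z, β * |deriv (deriv φ) z| ≤ (deriv φ z) ^ 2 * deriv (deriv (deriv φ)) z)
    (θ : Param m d) (α : Fin n → ℝ)
    (happrox : ‖gradRegG φ x θ - (2 : ℝ) • ∑ i, α i • gradF φ x i θ‖ ≤ Real.sqrt μ * β) :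
    ∀ u : Param m d,
      (∑ j, ∑ i, (deriv φ ⟪θ j, x i⟫ * deriv (deriv (deriv φ)) ⟪θ j, x i⟫)
          * ⟪x i, u j⟫ ^ 2
        ≤ ∑ j, ∑ i,
            (2 * deriv φ ⟪θ j, x i⟫ * deriv (deriv (deriv φ)) ⟪θ j, x i⟫
              + 2 * deriv (deriv φ) ⟪θ j, x i⟫ * (deriv (deriv φ) ⟪θ j, x i⟫ - α i))
            * ⟪x i, u j⟫ ^ 2) ∧
      (0 ≤ ∑ j, ∑ i, (deriv φ ⟪θ j, x i⟫ * deriv (deriv (deriv φ)) ⟪θ j, x i⟫)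
          * ⟪x i, u j⟫ ^ 2) :=
  stmt_6_general n m d x μ hμ hcoh φ ρ1 hρ1 hφ' β hβ hnormal θ α happrox
end
end

section
/- Let k ≥ 1 be an integer, ν > 0, and φ(z) = z^{2k+1} + ν z. Then φ'(z) ≥ ν > 0 and φ'''(z) ≥ 0 for all z ∈ ℝ, and φ satisfies β-normality with β = min{ 1 / ((2k+1)² (2k−1)), ν² }: for all z ∈ ℝ, β · |φ''(z)| ≤ φ'(z)² · φ'''(z). -/
/-
Writing k = j + 1, the derivatives are φ' = a z^(2j+2) + ν, φ'' = a b z^(2j+1) and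
φ''' = a b c z^(2j) with a = 2k+1, b = 2k, c = 2k-1 ≥ 1. Cancelling the common factor
a b z^(2j) ≥ 0, normality reduces to β |z| ≤ c φ'(z)². As β ≤ 1 and β ≤ ν², this follows
for |z| ≤ 1 from φ' ≥ ν, and for |z| ≥ 1 from φ' ≥ z^(2k) ≥ |z| ≥ 1.
-/

section Derivatives

variable {𝕜 : Type*} [NontriviallyNormedField 𝕜]

theorem deriv_pow_succ_add_const_mul (n : ℕ) (ν : 𝕜) :
    deriv (fun z : 𝕜 => z ^ (n + 1) + ν * z) = fun z => (n + 1) * z ^ n + ν := by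
  funext z
  have h : HasDerivAt (fun z : 𝕜 => z ^ (n + 1) + ν * z) ((n + 1 : ℕ) * z ^ n + ν * 1) z :=
    (hasDerivAt_pow (n + 1) z).add ((hasDerivAt_id z).const_mul ν)
  simpa using h.deriv

theorem deriv_const_mul_pow_succ (a : 𝕜) (n : ℕ) :
    deriv (fun z : 𝕜 => a * z ^ (n + 1)) = fun z => a * (n + 1) * z ^ n := by
  funext z
  simp [((hasDerivAt_pow (n + 1) z).const_mul a).deriv, mul_assoc]

theorem deriv_const_mul_pow_succ_add_const (a ν : 𝕜) (n : ℕ) :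
    deriv (fun z : 𝕜 => a * z ^ (n + 1) + ν) = fun z => a * (n + 1) * z ^ n := by
  rw [deriv_add_const', deriv_const_mul_pow_succ]

end Derivatives

theorem mul_abs_le_sq_const_mul_pow_add {β ν a : ℝ} {m : ℕ} (hm : Even m) (hm₀ : m ≠ 0)
    (hν : 0 ≤ ν) (ha : 1 ≤ a) (hβ₀ : 0 ≤ β) (hβ₁ : β ≤ 1) (hβν : β ≤ ν ^ 2) (z : ℝ) :
    β * |z| ≤ (a * z ^ m + ν) ^ 2 := by
  have hpow : 0 ≤ z ^ m := hm.pow_nonneg z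
  rcases le_total |z| 1 with hz | hz
  · calc β * |z| ≤ β := mul_le_of_le_one_right hβ₀ hz
      _ ≤ ν ^ 2 := hβν
      _ ≤ (a * z ^ m + ν) ^ 2 := by gcongr; nlinarith
  · have hw : |z| ≤ a * z ^ m + ν := by
      have : |z| ≤ z ^ m := by rw [← hm.pow_abs]; exact le_self_pow₀ hz hm₀
      nlinarith
    calc β * |z| ≤ |z| := mul_le_of_le_one_left (abs_nonneg z) hβ₁
      _ ≤ a * z ^ m + ν := hw
      _ ≤ (a * z ^ m + ν) ^ 2 := le_self_pow₀ (hz.trans hw) two_ne_zero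

theorem mul_abs_pow_succ_le_sq_mul_pow {β ν a b c : ℝ} (n : ℕ) (hν : 0 ≤ ν) (ha : 1 ≤ a)
    (hb : 0 ≤ b) (hc : 1 ≤ c) (hβ₀ : 0 ≤ β) (hβ₁ : β ≤ 1) (hβν : β ≤ ν ^ 2) (z : ℝ) :
    β * |a * b * z ^ (2 * n + 1)| ≤ (a * z ^ (2 * n + 2) + ν) ^ 2 * (a * b * c * z ^ (2 * n)) := by
  have hpow : 0 ≤ z ^ (2 * n) := (even_two_mul n).pow_nonneg z
  have hreduced : β * |z| ≤ c * (a * z ^ (2 * n + 2) + ν) ^ 2 :=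
    (mul_abs_le_sq_const_mul_pow_add ⟨n + 1, by ring⟩ (by omega) hν ha hβ₀ hβ₁ hβν z).trans
      (le_mul_of_one_le_left (sq_nonneg _) hc)
  calc β * |a * b * z ^ (2 * n + 1)| = a * b * z ^ (2 * n) * (β * |z|) := by
        rw [abs_mul, abs_of_nonneg (by positivity), pow_succ, abs_mul, abs_of_nonneg hpow]
        ring
    _ ≤ a * b * z ^ (2 * n) * (c * (a * z ^ (2 * n + 2) + ν) ^ 2) := by gcongr
    _ = (a * z ^ (2 * n + 2) + ν) ^ 2 * (a * b * c * z ^ (2 * n)) := by ring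

/-- for φ(z) = z^{2k+1} + νz with k ≥ 1 and ν > 0, we have φ' ≥ ν > 0,
φ''' ≥ 0, and φ satisfies β-normality with β = min{1/((2k+1)²(2k−1)), ν²}. -/
theorem stmt_19
    (k : ℕ) (hk : 1 ≤ k) (ν : ℝ) (hν : 0 < ν)
    (φ : ℝ → ℝ) (hφ : φ = fun z => z ^ (2 * k + 1) + ν * z)
    (β : ℝ)
    (hβ : β = min (1 / ((2 * (k : ℝ) + 1) ^ 2 * (2 * (k : ℝ) - 1))) (ν ^ 2)) :
    (∀ z, ν ≤ deriv φ z) ∧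
    (∀ z, 0 ≤ deriv (deriv (deriv φ)) z) ∧
    (∀ z, β * |deriv (deriv φ) z| ≤ (deriv φ z) ^ 2 * deriv (deriv (deriv φ)) z) := by
  have hk' : (1 : ℝ) ≤ k := by exact_mod_cast hk
  have hden : 1 ≤ (2 * (k : ℝ) + 1) ^ 2 * (2 * (k : ℝ) - 1) :=
    one_le_mul_of_one_le_of_one_le (by nlinarith) (by linarith)
  have hβ₀ : 0 ≤ β := hβ ▸ le_min (one_div_nonneg.mpr (zero_le_one.trans hden)) (sq_nonneg ν)
  have hβ₁ : β ≤ 1 := hβ ▸ (min_le_left _ _).trans (div_le_one_of_le₀ hden (zero_le_one.trans hden))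
  have hβν : β ≤ ν ^ 2 := hβ ▸ min_le_right _ _
  obtain ⟨j, rfl⟩ : ∃ j, k = j + 1 := ⟨k - 1, by omega⟩
  set a : ℝ := ((2 * j + 2 : ℕ) : ℝ) + 1
  set b : ℝ := ((2 * j + 1 : ℕ) : ℝ) + 1
  set c : ℝ := ((2 * j : ℕ) : ℝ) + 1
  have h₁ : deriv φ = fun z => a * z ^ (2 * j + 2) + ν := by
    rw [hφ, show 2 * (j + 1) + 1 = (2 * j + 2) + 1 by ring, deriv_pow_succ_add_const_mul]
  have h₂ : deriv (deriv φ) = fun z => a * b * z ^ (2 * j + 1) := by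
    rw [h₁, deriv_const_mul_pow_succ_add_const]
  have h₃ : deriv (deriv (deriv φ)) = fun z => a * b * c * z ^ (2 * j) := by
    rw [h₂, deriv_const_mul_pow_succ]
  have ha : 1 ≤ a := le_add_of_nonneg_left (Nat.cast_nonneg _)
  have hc : 1 ≤ c := le_add_of_nonneg_left (Nat.cast_nonneg _)
  refine ⟨fun z => ?_, fun z => ?_, fun z => ?_⟩
  · rw [h₁]
    exact le_add_of_nonneg_left (mul_nonneg (by linarith) (Even.pow_nonneg ⟨j + 1, by ring⟩ z))
  · rw [h₃]
    exact mul_nonneg (by positivity) ((even_two_mul j).pow_nonneg z)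
  · rw [h₃, h₂, h₁]
    exact mul_abs_pow_succ_le_sq_mul_pow j hν.le ha (by positivity) hc hβ₀ hβ₁ hβν z
end
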